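/- arXiv:1301.2835 — 2 statements merged into one kernel-verified Lean document; each statement's English description precedes it below -/
import Mathlib

section
/- Let R = ⊕_{i=1}^∞ R_i be a ring graded by the additive semigroup of positive integers which is a Jacobson radical ring. Then every subring S of R that is generated by homogeneous elements is itself a Jacobson radical ring. -/
/-!
Let `S` be a subring of `R` that contains every homogeneous component of each of its elements;
a subring generated by homogeneous elements is such, since the components of a product are sums
of products of components. If `a ∈ S` has quasi-inverse `b` in `R`, comparing degree-`n`
components of `a + b + a * b = 0` gives `bₙ = -aₙ - ∑_{i + j = n} aᵢ bⱼ`. As every degree is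
positive, only components `bⱼ` with `j < n` occur on the right, so by strong induction on `n`
all components of `b`, hence `b` itself, lie in `S`.
-/

/-- An element `a` of a (possibly non-unital) ring is quasi-regular if it has a quasi-inverse
`b`, i.e. `a + b + a * b = a + b + b * a = 0`. -/
def IsQuasiRegular {R : Type*} [NonUnitalRing R] (a : R) : Prop :=
  ∃ b : R, a + b + a * b = 0 ∧ a + b + b * a = 0

/-- A (possibly non-unital) ring is a Jacobson radical ring if all its elements are
quasi-regular. -/
def IsJacobsonRadicalRing (R : Type*) [NonUnitalRing R] : Prop :=
  ∀ a : R, IsQuasiRegular a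

open DirectSum

section

variable {R : Type*} [NonUnitalRing R] {σ : Type*} [SetLike σ R] [AddSubmonoidClass σ R]
  (ℳ : ℕ+ → σ) [Decomposition ℳ]

noncomputable def gradedProj (n : ℕ+) : R →+ R :=
  (AddSubmonoidClass.subtype (ℳ n)).comp <|
    (DFinsupp.evalAddMonoidHom n).comp (decomposeAddEquiv ℳ).toAddMonoidHom

theorem gradedProj_of_mem_same {x : R} {n : ℕ+} (hx : x ∈ ℳ n) : gradedProj ℳ n x = x :=
  decompose_of_mem_same ℳ hx

theorem gradedProj_of_mem_ne {x : R} {i n : ℕ+} (hx : x ∈ ℳ i) (h : i ≠ n) :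
    gradedProj ℳ n x = 0 :=
  decompose_of_mem_ne ℳ hx h

theorem gradedProj_mem (n : ℕ+) (x : R) : gradedProj ℳ n x ∈ ℳ n :=
  (decompose ℳ x n).2

theorem exists_finset_sum_gradedProj (x : R) :
    ∃ s : Finset ℕ+, ∑ n ∈ s, gradedProj ℳ n x = x := by
  classical
  exact ⟨_, sum_support_decompose ℳ x⟩

theorem gradedProj_mul_mem [SetLike.GradedMul ℳ] (S : NonUnitalSubring R) {x y : R} {n : ℕ+}
    (hx : ∀ i, gradedProj ℳ i x ∈ S) (hy : ∀ j < n, gradedProj ℳ j y ∈ S) :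
    gradedProj ℳ n (x * y) ∈ S := by
  obtain ⟨s, hs⟩ := exists_finset_sum_gradedProj ℳ x
  obtain ⟨t, ht⟩ := exists_finset_sum_gradedProj ℳ y
  rw [← hs, ← ht, Finset.sum_mul_sum, map_sum]
  refine sum_mem fun i _ => ?_
  rw [map_sum]
  refine sum_mem fun j _ => ?_
  have hij := SetLike.mul_mem_graded (gradedProj_mem ℳ i x) (gradedProj_mem ℳ j y)
  by_cases h : i + j = n
  · rw [gradedProj_of_mem_same ℳ (h ▸ hij)]
    exact mul_mem (hx i) (hy j (h ▸ PNat.lt_add_left j i))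
  · rw [gradedProj_of_mem_ne ℳ hij h]
    exact zero_mem S

def NonUnitalSubring.IsHomogeneous (S : NonUnitalSubring R) : Prop :=
  ∀ x ∈ S, ∀ n, gradedProj ℳ n x ∈ S

theorem NonUnitalSubring.isHomogeneous_closure [SetLike.GradedMul ℳ] {T : Set R}
    (hT : ∀ x ∈ T, ∃ i, x ∈ ℳ i) : (closure T).IsHomogeneous ℳ := by
  intro x hx
  induction hx using closure_induction with
  | mem z hz =>
    obtain ⟨i, hi⟩ := hT z hz
    intro n
    by_cases h : i = n
    · exact (gradedProj_of_mem_same ℳ (h ▸ hi)).symm ▸ subset_closure hz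
    · exact (gradedProj_of_mem_ne ℳ hi h).symm ▸ zero_mem _
  | zero => simp
  | add z w _ _ hz hw => exact fun n => map_add (gradedProj ℳ n) z w ▸ add_mem (hz n) (hw n)
  | neg z _ hz => exact fun n => map_neg (gradedProj ℳ n) z ▸ neg_mem (hz n)
  | mul z w _ _ hz hw => exact fun n => gradedProj_mul_mem ℳ _ hz fun j _ => hw j

theorem NonUnitalSubring.IsHomogeneous.mem_of_add_add_mul_eq_zero [SetLike.GradedMul ℳ]
    {S : NonUnitalSubring R} (hS : S.IsHomogeneous ℳ) {a b : R} (ha : a ∈ S)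
    (hab : a + b + a * b = 0) : b ∈ S := by
  have hproj : ∀ n, gradedProj ℳ n b ∈ S := by
    intro n
    induction n using PNat.strongInductionOn with
    | _ n ih =>
      have hn : gradedProj ℳ n b = -gradedProj ℳ n a - gradedProj ℳ n (a * b) := by
        rw [← zero_sub, ← map_zero (gradedProj ℳ n), ← hab, map_add, map_add]
        abel
      exact hn ▸ sub_mem (neg_mem (hS a ha n)) (gradedProj_mul_mem ℳ S (hS a ha) ih)
  obtain ⟨s, hs⟩ := exists_finset_sum_gradedProj ℳ b
  exact hs ▸ sum_mem fun n _ => hproj n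

theorem NonUnitalSubring.IsHomogeneous.isJacobsonRadicalRing [SetLike.GradedMul ℳ]
    {S : NonUnitalSubring R} (hS : S.IsHomogeneous ℳ) (hR : IsJacobsonRadicalRing R) :
    IsJacobsonRadicalRing S := by
  intro a
  obtain ⟨b, hab, hba⟩ := hR a
  exact ⟨⟨b, hS.mem_of_add_add_mul_eq_zero ℳ a.2 hab⟩, Subtype.ext hab, Subtype.ext hba⟩

end

/-- **Homogeneous subrings of a graded Jacobson radical ring are Jacobson radical.**
Let `R = ⊕_{i ≥ 1} Rᵢ` be a ring graded by the additive semigroup of positive integers which is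
a Jacobson radical ring.  Then every subring of `R` generated by a set of homogeneous elements
is itself a Jacobson radical ring. -/
theorem isJacobsonRadicalRing_closure_of_homogeneous {R : Type*} [NonUnitalRing R]
    (ℳ : ℕ+ → AddSubgroup R) [SetLike.GradedMul ℳ] [DirectSum.Decomposition ℳ]
    (hR : IsJacobsonRadicalRing R)
    (T : Set R) (hT : ∀ x ∈ T, ∃ i : ℕ+, x ∈ ℳ i) :
    IsJacobsonRadicalRing (NonUnitalSubring.closure T) :=
  (NonUnitalSubring.isHomogeneous_closure ℳ hT).isJacobsonRadicalRing ℳ hR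
end

section
/- Let R be a (not necessarily unital) ring such that every subring of R is a Jacobson radical ring. Then R is nil, i.e. every element of R is nilpotent. -/
/-- An iterated-product power for non-unital rings: `ppow a n = a ^ (n + 1)`. -/
def ppow {R : Type*} [NonUnitalRing R] (a : R) : ℕ → R
  | 0 => a
  | n + 1 => ppow a n * a

/-- An element of a (possibly non-unital) ring is nilpotent if some positive power vanishes. -/
def IsNilElem {R : Type*} [NonUnitalRing R] (a : R) : Prop :=
  ∃ n : ℕ, ppow a n = 0

/-! The subring `A` generated by `a` is commutative and finitely generated, so its
unitization `ℤ ⊕ A` is a finitely generated commutative `ℤ`-algebra, hence a Jacobson ring.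
Every element of `A` being quasi-regular means that `1 + A` consists of units, so `a` lies in
the Jacobson radical of `ℤ ⊕ A`, which in a Jacobson ring is the nilradical. -/

instance Int.instIsJacobsonRing : IsJacobsonRing ℤ := by
  refine isJacobsonRing_iff_prime_eq.mpr fun P hP => ?_
  rcases eq_or_ne P ⊥ with rfl | hP0
  · refine le_antisymm (fun x hx => ?_) Ideal.le_jacobson
    rw [Ideal.mem_bot]
    -- `x * x + 1` is a unit only for `x = 0`
    rcases Int.isUnit_iff.mp (Ideal.mem_jacobson_bot.mp hx x) with h | h <;> nlinarith
  · exact Ideal.jacobson_eq_self_of_isMaximal (H := hP.isMaximal hP0)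

theorem isQuasiregular_iff_isQuasiRegular {R : Type*} [NonUnitalRing R] {a : R} :
    IsQuasiregular a ↔ IsQuasiRegular a := by
  simp only [isQuasiregular_iff, IsQuasiRegular, add_comm _ a]

theorem map_ppow {F R S : Type*} [NonUnitalRing R] [NonUnitalRing S] [FunLike F R S]
    [NonUnitalRingHomClass F R S] (f : F) (a : R) (n : ℕ) : f (ppow a n) = ppow (f a) n := by
  induction n with
  | zero => rfl
  | succ n ih => rw [ppow, ppow, map_mul, ih]

theorem IsNilElem.map {F R S : Type*} [NonUnitalRing R] [NonUnitalRing S] [FunLike F R S]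
    [NonUnitalRingHomClass F R S] (f : F) {a : R} (ha : IsNilElem a) : IsNilElem (f a) := by
  obtain ⟨n, hn⟩ := ha
  exact ⟨n, by rw [← map_ppow, hn, map_zero]⟩

theorem NonUnitalSubring.closure_closure_coe_preimage {R : Type*} [NonUnitalRing R] {s : Set R} :
    closure (((↑) : closure s → R) ⁻¹' s) = ⊤ :=
  eq_top_iff.2 fun x _ ↦ Subtype.recOn x fun _ hx' ↦
    closure_induction (fun _ h ↦ subset_closure h) (zero_mem _) (fun _ _ _ _ ↦ add_mem)
      (fun _ _ ↦ neg_mem) (fun _ _ _ _ ↦ mul_mem) hx'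

namespace Unitization

variable {R A : Type*} [CommRing R] [NonUnitalRing A] [Module R A] [IsScalarTower R A A]
  [SMulCommClass R A A]

theorem inr_ppow (a : A) (n : ℕ) :
    ((ppow a n : A) : Unitization R A) = (a : Unitization R A) ^ (n + 1) := by
  induction n with
  | zero => rw [zero_add, pow_one, ppow]
  | succ n ih => rw [ppow, inr_mul, ih, ← pow_succ]

theorem isNilpotent_inr_iff [Nontrivial R] {a : A} :
    IsNilpotent (a : Unitization R A) ↔ IsNilElem a := by
  constructor
  · rintro ⟨_ | n, hn⟩
    · exact absurd (pow_zero (a : Unitization R A) ▸ hn) one_ne_zero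
    · exact ⟨n, inr_injective (R := R) (by rw [inr_ppow, hn, inr_zero])⟩
  · rintro ⟨n, hn⟩
    exact ⟨n + 1, by rw [← inr_ppow, hn, inr_zero]⟩

theorem adjoin_image_inr_eq_top {s : Set A} (hs : NonUnitalSubring.closure s = ⊤) :
    Algebra.adjoin ℤ ((↑) '' s : Set (Unitization ℤ A)) = ⊤ := by
  rw [eq_top_iff]
  rintro x -
  induction x using Unitization.ind with
  | inl_add_inr r a =>
    refine add_mem (algebraMap_eq_inl (R := ℤ) (A := A) ▸ Subalgebra.algebraMap_mem _ r) ?_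
    induction (hs ▸ trivial : a ∈ NonUnitalSubring.closure s) using
      NonUnitalSubring.closure_induction with
    | mem x hx => exact Algebra.subset_adjoin ⟨x, hx, rfl⟩
    | zero => rw [inr_zero]; exact zero_mem _
    | add x y _ _ hx hy => rw [inr_add]; exact add_mem hx hy
    -- `neg_mem` does not see through the `Semiring` instance this `Subalgebra` is built on
    | neg x _ hx => rw [inr_neg, ← neg_one_zsmul]; exact Subalgebra.smul_mem _ hx _
    | mul x y _ _ hx hy => rw [inr_mul]; exact mul_mem hx hy

end Unitization

theorem IsJacobsonRadicalRing.isNilElem_of_closure_eq_top {A : Type*} [NonUnitalCommRing A]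
    (hA : IsJacobsonRadicalRing A) {s : Set A} (hfin : s.Finite)
    (hs : NonUnitalSubring.closure s = ⊤) (a : A) : IsNilElem a := by
  have : Algebra.FiniteType ℤ (Unitization ℤ A) :=
    ⟨Subalgebra.fg_def.mpr ⟨_, hfin.image _, Unitization.adjoin_image_inr_eq_top hs⟩⟩
  have : IsJacobsonRing (Unitization ℤ A) := isJacobsonRing_of_finiteType (A := ℤ)
  have ha : ∀ y, IsUnit ((a : Unitization ℤ A) * y + 1) := by
    intro y
    induction y using Unitization.ind with
    | inl_add_inr r b =>
      rw [mul_add, Unitization.inr_mul_inl, ← Unitization.inr_mul, ← Unitization.inr_add,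
        add_comm]
      exact (isQuasiregular_iff_isUnit' ℤ).mp (isQuasiregular_iff_isQuasiRegular.mpr (hA _))
  have hjac := (Ideal.mem_jacobson_bot (R := Unitization ℤ A)).mpr ha
  rw [← Ideal.radical_eq_jacobson] at hjac
  exact Unitization.isNilpotent_inr_iff.mp (Ideal.mem_radical_iff.mp hjac)

/-- A (possibly non-unital) ring all of whose subrings are Jacobson radical rings is nil. -/
theorem isNil_of_all_subrings_jacobsonRadical {R : Type*} [NonUnitalRing R]
    (h : ∀ S : NonUnitalSubring R, IsJacobsonRadicalRing S) :
    ∀ a : R, IsNilElem a := by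
  intro a
  let S := NonUnitalSubring.closure {a}
  have : IsMulCommutative S :=
    NonUnitalSubring.isMulCommutative_closure (by rintro x rfl y rfl; rfl)
  open scoped IsMulCommutative in
  have hnil : IsNilElem (⟨a, NonUnitalSubring.subset_closure rfl⟩ : S) :=
    (h S).isNilElem_of_closure_eq_top
      ((Set.finite_singleton a).preimage Subtype.val_injective.injOn)
      NonUnitalSubring.closure_closure_coe_preimage _
  exact hnil.map (NonUnitalSubringClass.subtype S)
end
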